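/- Let Φ : Mₙ → Mₙ be linear, and let {C_m}, {D_m} be two operator systems on Mₙ generated from their n-th cones (C_m = {Σᵢ(Ad_{Aᵢ}⊗idₙ)(X) : Aᵢ ∈ M_{n,m}, X ∈ Cₙ}, similarly D_m). If (idₙ ⊗ Φ)(Cₙ) ⊆ Dₙ, then (id_m ⊗ Φ)(C_m) ⊆ D_m for every m ∈ ℕ. -/

import Mathlib

/-! `id_m ⊗ Φ` acts on the second tensor factor and `Ad_A ⊗ id_n` on the first, so the two
commute; with linearity of `id_m ⊗ Φ` this carries each generator `Σᵢ (Ad_{Aᵢ} ⊗ id_n)(X)` of `C_m`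
to `Σᵢ (Ad_{Aᵢ} ⊗ id_n)((id_n ⊗ Φ) X)`, a generator of `D_m`. -/

open scoped ComplexOrder Pointwise
open Matrix

noncomputable section

/-- `n × n` complex matrices. -/
abbrev Mat (n : ℕ) : Type := Matrix (Fin n) (Fin n) ℂ

/-- `M_m ⊗ M_n`, realized as matrices indexed by `Fin m × Fin n`. -/
abbrev Mat2 (m n : ℕ) : Type := Matrix (Fin m × Fin n) (Fin m × Fin n) ℂ

/-- `(id_m ⊗ Φ)(X)`: apply `Φ` to each `n × n` block of `X`. -/
def rmap {m n : ℕ} (Φ : Mat n → Mat n) (X : Mat2 m n) : Mat2 m n :=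
  Matrix.of fun p q => Φ (Matrix.of fun k l => X (p.1, k) (q.1, l)) p.2 q.2

/-- `(Φ ⊗ id_n)(X)`. -/
def lmap {m n : ℕ} (Φ : Mat m → Mat m) (X : Mat2 m n) : Mat2 m n :=
  Matrix.of fun p q => Φ (Matrix.of fun i j => X (i, p.2) (j, q.2)) p.1 q.1

/-- The unnormalized maximally entangled matrix `E = Σ_{i,j} e_ie_j* ⊗ e_ie_j*`. -/
def Emat (n : ℕ) : Mat2 n n :=
  Matrix.of fun p q => if p.1 = p.2 ∧ q.1 = q.2 then 1 else 0

/-- The Choi matrix `C_Φ = (id_n ⊗ Φ)(E)`. -/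
def choi {n : ℕ} (Φ : Mat n → Mat n) : Mat2 n n := rmap Φ (Emat n)

/-- `Ψ` is the Hilbert–Schmidt adjoint of `Φ`: `Tr(Φ(X)Y) = Tr(X Ψ(Y))`. -/
def IsAdjoint {n : ℕ} (Φ Ψ : Mat n → Mat n) : Prop :=
  ∀ X Y : Mat n, ((Φ X) * Y).trace = (X * Ψ Y).trace

/-- Complete positivity of a map on `M_n`. -/
def IsCP {n : ℕ} (Φ : Mat n → Mat n) : Prop :=
  ∀ m : ℕ, ∀ X : Mat2 m n, X.PosSemidef → (rmap Φ X).PosSemidef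

/-- Positivity of a map on `M_n`. -/
def IsPos {n : ℕ} (Φ : Mat n → Mat n) : Prop :=
  ∀ X : Mat n, X.PosSemidef → (Φ X).PosSemidef

/-- `(Ad_A ⊗ id_n)(X)` for a rectangular `A ∈ M_{m₁,m₂}`, where `Ad_A(Y) = A* Y A`. -/
def adT {m₁ m₂ n : ℕ} (A : Matrix (Fin m₁) (Fin m₂) ℂ) (X : Mat2 m₁ n) : Mat2 m₂ n :=
  Matrix.of fun p q => ∑ i, ∑ j, (star (A i p.1)) * X (i, p.2) (j, q.2) * A j q.1

/-- Tensor product `Y ⊗ Z ∈ M_n ⊗ M_n`. -/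
def kron {n : ℕ} (Y Z : Mat n) : Mat2 n n :=
  Matrix.of fun p q => Y p.1 q.1 * Z p.2 q.2

/-- Block-positivity: `(v* ⊗ w*) Y (v ⊗ w) ≥ 0` for all `v, w`. -/
def BlockPos {n : ℕ} (Y : Mat2 n n) : Prop :=
  ∀ v w : Fin n → ℂ,
    0 ≤ star (fun p : Fin n × Fin n => v p.1 * w p.2) ⬝ᵥ
        (Y *ᵥ fun p : Fin n × Fin n => v p.1 * w p.2)

/-- Separability: a sum of tensor products of positive semidefinite matrices. -/
def SepMat {n : ℕ} (Y : Mat2 n n) : Prop :=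
  ∃ (k : ℕ) (Z W : Fin k → Mat n),
    (∀ i, (Z i).PosSemidef) ∧ (∀ i, (W i).PosSemidef) ∧ Y = ∑ i, kron (Z i) (W i)

/-- The dual cone of a cone of (linear) maps, under the Choi-matrix pairing. -/
def dualC {n : ℕ} (C : Set (Mat n → Mat n)) : Set (Mat n → Mat n) :=
  {Ψ | IsLinearMap ℂ Ψ ∧ ∀ Φ ∈ C, 0 ≤ ((choi Φ) * (choi Ψ)).trace}

/-- Right-CP-invariance: closed under right composition with completely positive maps. -/
def RightCPInv {n : ℕ} (C : Set (Mat n → Mat n)) : Prop :=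
  ∀ Φ ∈ C, ∀ Ψ : Mat n → Mat n, IsCP Ψ → Φ ∘ Ψ ∈ C

/-- A convex cone of maps: closed under addition and nonnegative scaling. -/
def IsConvexConeMaps {n : ℕ} (C : Set (Mat n → Mat n)) : Prop :=
  (∀ Φ ∈ C, ∀ Ψ ∈ C, Φ + Ψ ∈ C) ∧ (∀ Φ ∈ C, ∀ c : ℝ, 0 ≤ c → c • Φ ∈ C)

/-- A convex cone of matrices: closed under addition and nonnegative scaling. -/
def IsConvexConeMat {m n : ℕ} (C : Set (Mat2 m n)) : Prop :=
  (∀ X ∈ C, ∀ Y ∈ C, X + Y ∈ C) ∧ (∀ X ∈ C, ∀ c : ℝ, 0 ≤ c → c • X ∈ C)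

/-- The flip (swap) operator `F ∈ M_n ⊗ M_n`, `F(a ⊗ b) = b ⊗ a`. -/
def flipMat (n : ℕ) : Mat2 n n :=
  Matrix.of fun p q => if p.1 = q.2 ∧ p.2 = q.1 then 1 else 0

/-- Column-stacking vectorization of a matrix, as an element of `ℂⁿ ⊗ ℂⁿ`. -/
def vecM {n : ℕ} (X : Mat n) : Fin n × Fin n → ℂ := fun p => X p.2 p.1

/-- The family of cones generated by a cone `Cₙ ⊆ Mₙ ⊗ Mₙ`:
`C_m = { Σᵢ (Ad_{Aᵢ} ⊗ id_n)(X) : Aᵢ ∈ M_{n,m}, X ∈ Cₙ }`. -/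
def genCone {n : ℕ} (Cn : Set (Mat2 n n)) (m : ℕ) : Set (Mat2 m n) :=
  {Y | ∃ (k : ℕ) (A : Fin k → Matrix (Fin n) (Fin m) ℂ) (X : Mat2 n n),
    X ∈ Cn ∧ Y = ∑ i, adT (A i) X}

def block {m n : ℕ} (X : Mat2 m n) (i j : Fin m) : Mat n :=
  Matrix.of fun k l => X (i, k) (j, l)

section

variable {m m' n : ℕ}

lemma rmap_apply (Φ : Mat n → Mat n) (X : Mat2 m n) (p q : Fin m × Fin n) :
    rmap Φ X p q = Φ (block X p.1 q.1) p.2 q.2 :=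
  rfl

lemma block_sum {ι : Type*} (s : Finset ι) (f : ι → Mat2 m n) (i j : Fin m) :
    block (∑ r ∈ s, f r) i j = ∑ r ∈ s, block (f r) i j := by
  ext; simp [block, Matrix.sum_apply]

lemma block_adT (A : Matrix (Fin m) (Fin m') ℂ) (X : Mat2 m n) (i' j' : Fin m') :
    block (adT A X) i' j' = ∑ i, ∑ j, (star (A i i') * A j j') • block X i j := by
  ext
  simp only [block, adT, Matrix.of_apply, Matrix.sum_apply, Matrix.smul_apply, smul_eq_mul]
  exact Finset.sum_congr rfl fun i _ => Finset.sum_congr rfl fun j _ => by ring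

variable (Φ : Mat n →ₗ[ℂ] Mat n)

lemma rmap_sum {ι : Type*} (s : Finset ι) (f : ι → Mat2 m n) :
    rmap Φ (∑ r ∈ s, f r) = ∑ r ∈ s, rmap Φ (f r) := by
  ext p q
  simp only [rmap_apply, block_sum, map_sum, Matrix.sum_apply]

lemma rmap_adT (A : Matrix (Fin m) (Fin m') ℂ) (X : Mat2 m n) :
    rmap Φ (adT A X) = adT A (rmap Φ X) := by
  ext p q
  rw [rmap_apply, block_adT]
  simp only [map_sum, map_smul, adT, Matrix.of_apply, rmap_apply, Matrix.sum_apply,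
    Matrix.smul_apply, smul_eq_mul]
  exact Finset.sum_congr rfl fun i _ => Finset.sum_congr rfl fun j _ => by ring

end

/-- If `(id_n ⊗ Φ)(Cₙ) ⊆ Dₙ` then `(id_m ⊗ Φ)(C_m) ⊆ D_m` for all `m`,
for the operator systems generated from the `n`-th cones. -/
theorem stmt10 (n : ℕ) (Cn Dn : Set (Mat2 n n)) (Φ : Mat n → Mat n)
    (hΦ : IsLinearMap ℂ Φ)
    (h : ∀ X ∈ Cn, rmap Φ X ∈ Dn) :
    ∀ m : ℕ, ∀ X ∈ genCone Cn m, rmap Φ X ∈ genCone Dn m := by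
  rintro m _ ⟨k, A, X, hX, rfl⟩
  refine ⟨k, A, rmap Φ X, h X hX, ?_⟩
  let L := IsLinearMap.mk' Φ hΦ
  calc rmap L (∑ i, adT (A i) X) = ∑ i, rmap L (adT (A i) X) := rmap_sum L _ _
    _ = ∑ i, adT (A i) (rmap L X) := by simp only [rmap_adT]
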